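/- arXiv:2409.16483 — 3 statements merged into one kernel-verified Lean document; each statement's English description precedes it below -/
import Mathlib

section
/- If λ, λ' belong to the closed fundamental alcove 𝒜₀ of an irreducible root system and λ − λ' lies in the coroot lattice Q^∨, then λ = λ'. -/
open scoped RealInnerProductSpace Pointwise

noncomputable section

variable (E : Type) [NormedAddCommGroup E] [InnerProductSpace ℝ E] [FiniteDimensional ℝ E]

/-- The coroot `x^∨ = 2x/⟪x,x⟫` of a vector, under the identification of `V` with `V*`
via the inner product. -/
def coroot (x : E) : E := (2 / ⟪x, x⟫) • x

/-- Data of an irreducible reduced root system `Φ` in a Euclidean space `E`,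
together with a system of simple roots `α i`, the highest root `α₀` with its coefficients
`n i`, and the fundamental coweights `ϖ i`. -/
structure KPData (r : ℕ) where
  Φ : Finset E
  Φ_nonempty : Φ.Nonempty
  root_ne_zero : ∀ x ∈ Φ, x ≠ (0 : E)
  span_eq_top : Submodule.span ℝ (Φ : Set E) = ⊤
  reduced : ∀ x ∈ Φ, ∀ t : ℝ, t • x ∈ Φ → t = 1 ∨ t = -1
  integrality : ∀ x ∈ Φ, ∀ y ∈ Φ, ∃ m : ℤ, ⟪coroot E x, y⟫ = (m : ℝ)
  reflect_mem : ∀ x ∈ Φ, ∀ y ∈ Φ, y - ⟪coroot E x, y⟫ • x ∈ Φ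
  irreducible : ∀ S ⊆ (Φ : Set E), (∀ x ∈ S, ∀ y ∈ (Φ : Set E) \ S, ⟪x, y⟫ = 0) →
    S = ∅ ∨ S = (Φ : Set E)
  α : Fin r → E
  α_mem : ∀ i, α i ∈ Φ
  α_indep : LinearIndependent ℝ α
  pos_or_neg : ∀ x ∈ Φ, (∃ c : Fin r → ℝ, (∀ i, 0 ≤ c i) ∧ x = ∑ i, c i • α i) ∨
    (∃ c : Fin r → ℝ, (∀ i, 0 ≤ c i) ∧ x = -∑ i, c i • α i)
  ϖ : Fin r → E
  ϖ_pair : ∀ i j, ⟪ϖ i, α j⟫ = if i = j then 1 else 0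
  n : Fin r → ℕ
  n_pos : ∀ i, 0 < n i
  α₀ : E
  α₀_mem : α₀ ∈ Φ
  α₀_eq : α₀ = ∑ i, (n i : ℝ) • α i
  α₀_highest : ∀ x ∈ Φ, ∃ c : Fin r → ℝ, (∀ i, 0 ≤ c i) ∧ α₀ - x = ∑ i, c i • α i

namespace KPData

variable {E} {r : ℕ} (D : KPData E r)

/-- The set of positive roots. -/
def posRoots : Set E :=
  {x ∈ (D.Φ : Set E) | ∃ c : Fin r → ℝ, (∀ i, 0 ≤ c i) ∧ x = ∑ i, c i • D.α i}

/-- The closed fundamental alcove `𝒜₀`. -/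
def alcove : Set E := {l | (∀ i, 0 ≤ ⟪l, D.α i⟫) ∧ ⟪l, D.α₀⟫ ≤ 1}

/-- The closed fundamental Weyl chamber `𝒞₀`. -/
def chamber : Set E := {l | ∀ i, 0 ≤ ⟪l, D.α i⟫}

/-- The coroot lattice `Q^∨ = ℤΦ^∨`. -/
def corootLattice : AddSubgroup E := AddSubgroup.closure (coroot E '' (D.Φ : Set E))

/-- The root lattice `Q = ℤΦ`. -/
def rootLattice : AddSubgroup E := AddSubgroup.closure (D.Φ : Set E)

/-- The coweight lattice `P^∨`, spanned by the fundamental coweights. -/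
def coweightLattice : AddSubgroup E := AddSubgroup.closure (Set.range D.ϖ)

/-- The weight lattice `P`. -/
def weightLattice : AddSubgroup E where
  carrier := {x | ∀ y ∈ D.Φ, ∃ m : ℤ, ⟪coroot E y, x⟫ = (m : ℝ)}
  zero_mem' := fun y _ => ⟨0, by simp⟩
  add_mem' := by
    rintro a b ha hb y hy
    obtain ⟨m, hm⟩ := ha y hy
    obtain ⟨m', hm'⟩ := hb y hy
    exact ⟨m + m', by rw [inner_add_right, hm, hm']; push_cast; ring⟩
  neg_mem' := by
    rintro a ha y hy
    obtain ⟨m, hm⟩ := ha y hy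
    exact ⟨-m, by rw [inner_neg_right, hm]; push_cast; ring⟩

/-- The reflection in the hyperplane orthogonal to `x`, as an affine automorphism. -/
def refl (x : E) : E ≃ᵃ[ℝ] E :=
  ((Submodule.reflection (ℝ ∙ x)ᗮ).toLinearEquiv).toAffineEquiv

/-- Translation by a vector, as an affine automorphism. -/
def transl (v : E) : E ≃ᵃ[ℝ] E := AffineEquiv.constVAdd ℝ E v

/-- The finite Weyl group `W`, realized as a group of affine automorphisms. -/
def weylGroup : Subgroup (E ≃ᵃ[ℝ] E) :=
  Subgroup.closure {f | ∃ x ∈ D.Φ, f = refl x}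

/-- The intermediate affine Weyl group `W_Λ = Λ ⋊ W` attached to a lattice `Λ`. -/
def affWeylOf (Λ : AddSubgroup E) : Subgroup (E ≃ᵃ[ℝ] E) :=
  Subgroup.closure ({f | ∃ v ∈ Λ, f = transl v} ∪ {f | ∃ x ∈ D.Φ, f = refl x})

/-- The affine Weyl group `W_a = Q^∨ ⋊ W`. -/
def affWeyl : Subgroup (E ≃ᵃ[ℝ] E) := D.affWeylOf D.corootLattice

/-- The extended affine Weyl group `Ŵ_a = P^∨ ⋊ W`. -/
def extAffWeyl : Subgroup (E ≃ᵃ[ℝ] E) := D.affWeylOf D.coweightLattice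

/-- The stabilizer `Ω` of the fundamental alcove in the extended affine Weyl group. -/
def alcoveStab : Subgroup (E ≃ᵃ[ℝ] E) where
  carrier := {f | f ∈ D.extAffWeyl ∧ f '' D.alcove = D.alcove}
  one_mem' := ⟨one_mem _, by simp [AffineEquiv.coe_one, Set.image_id]⟩
  mul_mem' := by
    rintro a b ⟨ha, ha'⟩ ⟨hb, hb'⟩
    exact ⟨mul_mem ha hb, by rw [AffineEquiv.coe_mul, Set.image_comp, hb', ha']⟩
  inv_mem' := by
    rintro f ⟨hf, hf'⟩
    refine ⟨inv_mem hf, ?_⟩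
    conv_lhs => rw [← hf']
    rw [show ⇑(f⁻¹) = ⇑f.symm from rfl, ← Set.image_comp]
    simp [Function.comp_def]

/-- The Komrakov–Premet polytope `F`. -/
def KP : Set E :=
  {l ∈ D.alcove | ∀ i, D.n i = 1 → ⟪l, D.α₀ + D.α i⟫ ≤ 1}

/-- A closed, connected fundamental domain for a group of affine transformations. -/
def IsFundDom (G : Subgroup (E ≃ᵃ[ℝ] E)) (F : Set E) : Prop :=
  IsClosed F ∧ IsConnected F ∧ (⋃ g ∈ G, (g : E ≃ᵃ[ℝ] E) '' F) = Set.univ ∧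
    ∀ g ∈ G, g ≠ 1 → interior ((g : E ≃ᵃ[ℝ] E) '' F ∩ F) = ∅

/-- The length of a Weyl group element: the number of positive roots sent to negative roots. -/
def len (w : E ≃ᵃ[ℝ] E) : ℕ :=
  Nat.card {x : E // x ∈ D.posRoots ∧ w x ∈ Neg.neg '' D.posRoots}

end KPData

open KPData

variable {E} {r : ℕ}

/-!
For `λ, λ'` in the alcove, `v = λ - λ'` pairs with every root to at most `1` (use `0 ≤ ⟪μ, x⟫ ≤ 1`
for positive roots), and to an integer since `v ∈ Q^∨`. Write `v` as a sum of coroots. If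
`v ≠ 0`, then `⟪v, v⟫ > 0` forces a summand `x^∨` with `⟪v, x⟫ = 1`. Then `v - x^∨ = s_x v` is a
shorter sum of coroots whose pairings with `Φ` are those of `v` permuted by `s_x`, so by induction
it vanishes; but then `⟪v, x⟫ = ⟪x^∨, x⟫ = 2`.
-/

section

variable {V : Type} [NormedAddCommGroup V] [InnerProductSpace ℝ V]

lemma coroot_inner_self {x : V} (hx : x ≠ 0) : ⟪coroot V x, x⟫ = 2 := by
  rw [coroot, real_inner_smul_left, div_mul_cancel₀ _ (inner_self_ne_zero.mpr hx)]

lemma coroot_neg (x : V) : coroot V (-x) = -coroot V x := by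
  rw [coroot, coroot, inner_neg_neg, smul_neg]

lemma inner_coroot_pos_iff {x : V} (hx : x ≠ 0) (v : V) :
    0 < ⟪v, coroot V x⟫ ↔ 0 < ⟪v, x⟫ := by
  have hxx : 0 < ⟪x, x⟫ := real_inner_self_pos.mpr hx
  rw [coroot, real_inner_smul_right]
  exact mul_pos_iff_of_pos_left (by positivity)

lemma inner_sub_coroot_of_inner_eq_one {v x : V} (h : ⟪v, x⟫ = 1) (y : V) :
    ⟪v - coroot V x, y⟫ = ⟪v, y - ⟪coroot V x, y⟫ • x⟫ := by
  rw [inner_sub_left, inner_sub_right, real_inner_smul_right, h, mul_one, real_inner_comm]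

namespace KPData

variable (D : KPData V r)

lemma neg_mem {x : V} (hx : x ∈ D.Φ) : -x ∈ D.Φ := by
  have h := D.reflect_mem x hx x hx
  rwa [coroot_inner_self (D.root_ne_zero x hx), two_smul, sub_add_cancel_left] at h

lemma inner_sum_smul_α_nonneg {μ : V} (hμ : μ ∈ D.chamber) {c : Fin r → ℝ}
    (hc : ∀ i, 0 ≤ c i) : 0 ≤ ⟪μ, ∑ i, c i • D.α i⟫ := by
  rw [inner_sum]
  exact Finset.sum_nonneg fun i _ => by
    rw [real_inner_smul_right]
    exact mul_nonneg (hc i) (hμ i)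

lemma inner_le_one_of_mem_alcove {μ x : V} (hμ : μ ∈ D.alcove) (hx : x ∈ D.Φ) :
    ⟪μ, x⟫ ≤ 1 := by
  obtain ⟨c, hc, hcx⟩ := D.α₀_highest x hx
  have h := D.inner_sum_smul_α_nonneg hμ.1 hc
  rw [← hcx, inner_sub_right] at h
  linarith [hμ.2]

lemma inner_sub_le_one_of_mem_alcove {μ μ' x : V} (hμ : μ ∈ D.alcove) (hμ' : μ' ∈ D.alcove)
    (hx : x ∈ D.Φ) : ⟪μ - μ', x⟫ ≤ 1 := by
  rw [inner_sub_left]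
  rcases D.pos_or_neg x hx with ⟨c, hc, rfl⟩ | ⟨c, hc, rfl⟩
  · have := D.inner_le_one_of_mem_alcove hμ hx
    have := D.inner_sum_smul_α_nonneg hμ'.1 hc
    linarith
  · have := D.inner_sum_smul_α_nonneg hμ.1 hc
    have := D.inner_le_one_of_mem_alcove hμ' (D.neg_mem hx)
    rw [inner_neg_right] at *
    linarith

lemma exists_int_inner_eq_of_mem_corootLattice {v : V} (hv : v ∈ D.corootLattice)
    {x : V} (hx : x ∈ D.Φ) : ∃ m : ℤ, ⟪v, x⟫ = m := by
  induction hv using AddSubgroup.closure_induction with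
  | mem y hy =>
    obtain ⟨z, hz, rfl⟩ := hy
    exact D.integrality z hz x hx
  | zero => exact ⟨0, by simp⟩
  | add a b _ _ ha hb =>
    obtain ⟨m, hm⟩ := ha
    obtain ⟨m', hm'⟩ := hb
    exact ⟨m + m', by rw [inner_add_left, hm, hm', Int.cast_add]⟩
  | neg a _ ha =>
    obtain ⟨m, hm⟩ := ha
    exact ⟨-m, by rw [inner_neg_left, hm, Int.cast_neg]⟩

lemma exists_multiset_sum_eq_of_mem_corootLattice {v : V} (hv : v ∈ D.corootLattice) :
    ∃ s : Multiset V, (∀ y ∈ s, y ∈ coroot V '' D.Φ) ∧ s.sum = v := by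
  have hneg : -(coroot V '' D.Φ) ⊆ coroot V '' D.Φ := by
    rintro y ⟨z, hz, hzy⟩
    exact ⟨-z, D.neg_mem hz, by rw [coroot_neg, hzy, neg_neg]⟩
  have hv' : v ∈ AddSubmonoid.closure (coroot V '' D.Φ) := by
    rw [← Set.union_eq_self_of_subset_right hneg, ← AddSubgroup.closure_toAddSubmonoid]
    exact hv
  exact AddSubmonoid.exists_multiset_of_mem_closure hv'

lemma multiset_sum_eq_zero_of_inner_le_one (s : Multiset V)
    (hs : ∀ y ∈ s, y ∈ coroot V '' D.Φ) (hle : ∀ x ∈ D.Φ, ⟪s.sum, x⟫ ≤ 1) : s.sum = 0 := by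
  classical
  induction s using Multiset.strongInductionOn with
  | ih s ih =>
  by_contra hv
  obtain ⟨y, hys, hpos⟩ : ∃ y ∈ s, 0 < ⟪s.sum, y⟫ := by
    by_contra! h
    have hnonpos : ⟪s.sum, s.sum⟫ ≤ 0 := by
      rw [← innerₛₗ_apply_apply (𝕜 := ℝ), map_multiset_sum]
      exact (Multiset.sum_le_card_nsmul _ 0 (Multiset.forall_mem_map_iff.2 h)).trans_eq
        (smul_zero _)
    exact hv (real_inner_self_nonpos.mp hnonpos)
  obtain ⟨x, hx, rfl⟩ := hs y hys
  have hx0 := D.root_ne_zero x hx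
  have hvx : ⟪s.sum, x⟫ = 1 := by
    obtain ⟨m, hm⟩ := D.exists_int_inner_eq_of_mem_corootLattice
      (AddSubgroup.multiset_sum_mem _ s fun y hy => AddSubgroup.subset_closure (hs y hy)) hx
    have hm0 : (0 : ℤ) < m := by exact_mod_cast hm ▸ (inner_coroot_pos_iff hx0 _).1 hpos
    have hm1 : m ≤ 1 := by exact_mod_cast hm ▸ hle x hx
    rw [hm, show m = 1 by omega, Int.cast_one]
  have hsum : (s.erase (coroot V x)).sum = s.sum - coroot V x :=
    eq_sub_of_add_eq' (Multiset.sum_erase hys)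
  have hzero := ih _ (Multiset.erase_lt.2 hys) (fun y hy => hs y (Multiset.mem_of_mem_erase hy))
    fun x' hx' => by
      rw [hsum, inner_sub_coroot_of_inner_eq_one hvx]
      exact hle _ (D.reflect_mem x hx x' hx')
  rw [hsum, sub_eq_zero] at hzero
  rw [hzero, coroot_inner_self hx0] at hvx
  norm_num at hvx

lemma eq_zero_of_mem_corootLattice_of_inner_le_one {v : V} (hv : v ∈ D.corootLattice)
    (hle : ∀ x ∈ D.Φ, ⟪v, x⟫ ≤ 1) : v = 0 := by
  obtain ⟨s, hs, rfl⟩ := D.exists_multiset_sum_eq_of_mem_corootLattice hv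
  exact D.multiset_sum_eq_zero_of_inner_le_one s hs hle

end KPData

end

/-- Two points of the fundamental alcove differing by a coroot lattice
element coincide. -/
theorem alcove_points_congruent_mod_corootLattice (D : KPData E r)
    (lam lam' : E) (hlam : lam ∈ D.alcove) (hlam' : lam' ∈ D.alcove)
    (h : lam - lam' ∈ D.corootLattice) : lam = lam' :=
  sub_eq_zero.mp <| D.eq_zero_of_mem_corootLattice_of_inner_le_one h fun _ hx =>
    D.inner_sub_le_one_of_mem_alcove hlam hlam' hx
end
end

section
/- Let F = {λ ∈ 𝒜₀ : ⟨λ, α₀ + α_j⟩ ≤ 1 for all j ∈ J} where J = {i : n_i = 1}. If λ, λ' ∈ F and λ − λ' belongs to the coweight lattice P^∨, then λ = λ'. -/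
open scoped RealInnerProductSpace Pointwise

noncomputable section

variable (E : Type) [NormedAddCommGroup E] [InnerProductSpace ℝ E] [FiniteDimensional ℝ E]

open KPData

variable {E} {r : ℕ}

/-! Every point of `F` pairs with every simple root to a value in `[0, 1/2]`. Hence
`⟪λ - λ', α i⟫` is an integer in `[-1/2, 1/2]`, i.e. `0`, and since the simple roots form a basis
of `E`, `λ = λ'`. -/

namespace KPData

omit [FiniteDimensional ℝ E]

variable (D : KPData E r)

theorem inner_α₀_eq_sum (l : E) : ⟪l, D.α₀⟫ = ∑ j, (D.n j : ℝ) * ⟪l, D.α j⟫ := by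
  simp only [D.α₀_eq, inner_sum, real_inner_smul_right]

theorem n_mul_inner_α_le_inner_α₀ {l : E} (hl : l ∈ D.chamber) (i : Fin r) :
    (D.n i : ℝ) * ⟪l, D.α i⟫ ≤ ⟪l, D.α₀⟫ := by
  rw [inner_α₀_eq_sum]
  exact Finset.single_le_sum (fun j _ => mul_nonneg (Nat.cast_nonneg _) (hl j))
    (Finset.mem_univ i)

/-- For `n i ≥ 2` this is the alcove bound `n i ⟪l, α i⟫ ≤ ⟪l, α₀⟫ ≤ 1`; for `n i = 1` it is the
extra inequality `⟪l, α₀ + α i⟫ ≤ 1` cutting `F` out of `𝒜₀`, combined with `⟪l, α i⟫ ≤ ⟪l, α₀⟫`. -/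
theorem inner_α_le_half_of_mem_KP {l : E} (hl : l ∈ D.KP) (i : Fin r) :
    ⟪l, D.α i⟫ ≤ 1 / 2 := by
  have hchamber : l ∈ D.chamber := hl.1.1
  have hle := D.n_mul_inner_α_le_inner_α₀ hchamber i
  rcases Nat.lt_or_ge (D.n i) 2 with hn | hn
  · have hn1 : D.n i = 1 := by have := D.n_pos i; omega
    have hKP := hl.2 i hn1
    rw [inner_add_right] at hKP
    rw [hn1, Nat.cast_one, one_mul] at hle
    linarith
  · have hn2 : (2 : ℝ) ≤ D.n i := by exact_mod_cast hn
    nlinarith [hchamber i, hl.1.2]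

theorem exists_int_inner_α_of_mem_coweightLattice {x : E} (hx : x ∈ D.coweightLattice)
    (i : Fin r) : ∃ m : ℤ, ⟪x, D.α i⟫ = m := by
  induction hx using AddSubgroup.closure_induction with
  | mem y hy =>
    obtain ⟨j, rfl⟩ := hy
    exact ⟨if j = i then 1 else 0, by rw [D.ϖ_pair j i]; split_ifs <;> simp⟩
  | zero => exact ⟨0, by simp⟩
  | add a b _ _ ha hb =>
    obtain ⟨m, hm⟩ := ha
    obtain ⟨m', hm'⟩ := hb
    exact ⟨m + m', by rw [inner_add_left, hm, hm', Int.cast_add]⟩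
  | neg a _ ha =>
    obtain ⟨m, hm⟩ := ha
    exact ⟨-m, by rw [inner_neg_left, hm, Int.cast_neg]⟩

theorem span_α_eq_top : Submodule.span ℝ (Set.range D.α) = ⊤ := by
  have hα : ∀ c : Fin r → ℝ, ∑ i, c i • D.α i ∈ Submodule.span ℝ (Set.range D.α) :=
    fun c => Submodule.sum_mem _ fun i _ => Submodule.smul_mem _ _ (Submodule.subset_span ⟨i, rfl⟩)
  rw [eq_top_iff, ← D.span_eq_top, Submodule.span_le]
  intro x hx
  rcases D.pos_or_neg x hx with ⟨c, -, rfl⟩ | ⟨c, -, rfl⟩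
  · exact hα c
  · exact Submodule.neg_mem _ (hα c)

def simpleRootBasis : Module.Basis (Fin r) ℝ E :=
  Module.Basis.mk D.α_indep D.span_α_eq_top.ge

@[simp]
theorem simpleRootBasis_apply (i : Fin r) : D.simpleRootBasis i = D.α i :=
  Module.Basis.mk_apply _ _ i

end KPData

/-- Two points of the Komrakov–Premet polytope differing by an element of
the coweight lattice coincide. -/
theorem KP_points_congruent_mod_coweightLattice (D : KPData E r)
    (lam lam' : E) (hlam : lam ∈ D.KP) (hlam' : lam' ∈ D.KP)
    (h : lam - lam' ∈ D.coweightLattice) : lam = lam' := by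
  refine InnerProductSpace.ext_inner_right_basis D.simpleRootBasis fun i => ?_
  obtain ⟨m, hm⟩ := D.exists_int_inner_α_of_mem_coweightLattice h i
  rw [inner_sub_left] at hm
  have hlo : (-1 : ℝ) < m := by
    linarith [D.inner_α_le_half_of_mem_KP hlam' i, hlam.1.1 i]
  have hhi : (m : ℝ) < 1 := by
    linarith [D.inner_α_le_half_of_mem_KP hlam i, hlam'.1.1 i]
  have hm0 : m = 0 := by
    have : -1 < m := by exact_mod_cast hlo
    have : m < 1 := by exact_mod_cast hhi
    omega
  rw [D.simpleRootBasis_apply, ← sub_eq_zero, hm, hm0, Int.cast_zero]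
end
end

section
/- For i with n_i = 1, the element w_i = w_0^i w_0 is the unique element w of the finite Weyl group W of minimal length such that ϖ_i^∨ ∈ w w_0(𝒞₀), where 𝒞₀ is the closed fundamental Weyl chamber and w_0 the longest element of W. -/
open scoped RealInnerProductSpace Pointwise

noncomputable section

variable (E : Type) [NormedAddCommGroup E] [InnerProductSpace ℝ E] [FiniteDimensional ℝ E]

open KPData

variable {E} {r : ℕ}

/-! The condition `ϖᵢ ∈ w w₀(𝒞₀)` says that `w` sends every positive root to a root with
nonpositive `αᵢ`-coordinate. For such `w`, `β ↦ -wβ` is a bijection from the inversions `β` of `w`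
with `⟪ϖᵢ, wβ⟫ ≠ 0` onto the positive roots involving `αᵢ`, so `ℓ(w)` is at least the number of
those roots, with equality iff every inversion of `w` is of this kind; `wᵢ` attains the bound.
In the case of equality the set `w(Φ⁺)` is forced: it consists of the roots with negative
`αᵢ`-coordinate and the positive roots with zero `αᵢ`-coordinate. Two elements of `W` with the same
image of `Φ⁺` coincide, since an element preserving `Φ⁺` is trivial by the exchange condition for
words in the simple reflections. -/

namespace KPData

section

omit [FiniteDimensional ℝ E]

variable {D : KPData E r}

lemma refl_apply (x y : E) : refl x y = y - ⟪coroot E x, y⟫ • x := by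
  have h : refl x y = Submodule.reflection (ℝ ∙ x)ᗮ y := rfl
  rw [h, Submodule.reflection_orthogonal_apply, Submodule.reflection_singleton_apply, coroot,
    real_inner_smul_left, real_inner_self_eq_norm_sq]
  simp only [RCLike.ofReal_real_eq_id, id_eq]
  rw [show 2 / ‖x‖ ^ 2 * ⟪x, y⟫ = ⟪x, y⟫ / ‖x‖ ^ 2 + ⟪x, y⟫ / ‖x‖ ^ 2 by ring, add_smul]
  abel

lemma inner_coroot_left (x y : E) : ⟪coroot E x, y⟫ = 2 / ⟪x, x⟫ * ⟪x, y⟫ := by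
  rw [coroot, real_inner_smul_left]

lemma inner_coroot_self {x : E} (hx : x ≠ 0) : ⟪coroot E x, x⟫ = 2 := by
  rw [inner_coroot_left, div_mul_cancel₀ _ (inner_self_ne_zero.mpr hx)]

lemma refl_apply_self {x : E} (hx : x ≠ 0) : refl x x = -x := by
  rw [refl_apply, inner_coroot_self hx, two_smul]
  abel

lemma refl_apply_of_inner_eq_zero {x y : E} (h : ⟪x, y⟫ = 0) : refl x y = y := by
  rw [refl_apply, inner_coroot_left, h, mul_zero, zero_smul, sub_zero]

lemma refl_refl (x y : E) : refl x (refl x y) = y :=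
  Submodule.reflection_reflection _ y

lemma refl_mul_self (x : E) : refl x * refl x = 1 :=
  AffineEquiv.ext (refl_refl x)

lemma refl_inv (x : E) : (refl x)⁻¹ = refl x :=
  inv_eq_of_mul_eq_one_right (refl_mul_self x)

lemma refl_neg (x : E) : refl (-x) = refl x := by
  ext y
  simp only [refl_apply, coroot, real_inner_smul_left, inner_neg_left, inner_neg_right, smul_neg,
    neg_smul, neg_neg]

structure IsRootIsometry (D : KPData E r) (f : E ≃ᵃ[ℝ] E) : Prop where
  map_zero : f 0 = 0
  inner_map_map : ∀ a b : E, ⟪f a, f b⟫ = ⟪a, b⟫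
  mem_Φ_iff : ∀ x : E, f x ∈ D.Φ ↔ x ∈ D.Φ

namespace IsRootIsometry

variable {f g : E ≃ᵃ[ℝ] E}

lemma apply_eq_linear (hf : IsRootIsometry D f) (x : E) : f x = f.linear x := by
  simpa [hf.map_zero] using (f.toAffineMap.linearMap_vsub x 0).symm

lemma map_neg (hf : IsRootIsometry D f) (x : E) : f (-x) = -f x := by
  rw [hf.apply_eq_linear, hf.apply_eq_linear, _root_.map_neg]

lemma map_sub_smul (hf : IsRootIsometry D f) (c : ℝ) (x y : E) :
    f (y - c • x) = f y - c • f x := by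
  rw [hf.apply_eq_linear, hf.apply_eq_linear, hf.apply_eq_linear, map_sub, map_smul]

lemma mem_Φ (hf : IsRootIsometry D f) {x : E} (hx : x ∈ D.Φ) : f x ∈ D.Φ :=
  (hf.mem_Φ_iff x).mpr hx

lemma one : IsRootIsometry D 1 :=
  ⟨rfl, fun _ _ => rfl, fun _ => Iff.rfl⟩

lemma mul (hf : IsRootIsometry D f) (hg : IsRootIsometry D g) : IsRootIsometry D (f * g) where
  map_zero := by simp [hf.map_zero, hg.map_zero]
  inner_map_map a b := by simp [hf.inner_map_map, hg.inner_map_map]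
  mem_Φ_iff x := by simp [hf.mem_Φ_iff, hg.mem_Φ_iff]

lemma inv (hf : IsRootIsometry D f) : IsRootIsometry D f⁻¹ where
  map_zero := by
    conv_lhs => rw [← hf.map_zero]
    exact f.symm_apply_apply 0
  inner_map_map a b := by
    rw [← hf.inner_map_map]
    exact congrArg₂ _ (f.apply_symm_apply a) (f.apply_symm_apply b)
  mem_Φ_iff x := by
    rw [← hf.mem_Φ_iff]
    exact Iff.of_eq (congrArg (· ∈ D.Φ) (f.apply_symm_apply x))

lemma inner_inv_apply (hf : IsRootIsometry D f) (a b : E) : ⟪f⁻¹ a, b⟫ = ⟪a, f b⟫ := by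
  rw [← hf.inner_map_map]
  exact congrArg (⟪·, f b⟫) (f.apply_symm_apply a)

lemma refl {x : E} (hx : x ∈ D.Φ) : IsRootIsometry D (refl x) where
  map_zero := _root_.map_zero (Submodule.reflection (ℝ ∙ x)ᗮ)
  inner_map_map := (Submodule.reflection (ℝ ∙ x)ᗮ).inner_map_map
  mem_Φ_iff y := by
    refine ⟨fun hy => ?_, fun hy => ?_⟩
    · rw [← refl_refl x y, refl_apply]
      exact D.reflect_mem x hx _ hy
    · rw [refl_apply]
      exact D.reflect_mem x hx y hy

lemma of_mem_closure {T : Set E} (hT : T ⊆ D.Φ)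
    (hf : f ∈ Subgroup.closure {f | ∃ x ∈ T, f = KPData.refl x}) : IsRootIsometry D f := by
  induction hf using Subgroup.closure_induction with
  | mem _ hg => obtain ⟨x, hx, rfl⟩ := hg; exact .refl (hT hx)
  | one => exact .one
  | mul _ _ _ _ hg hh => exact hg.mul hh
  | inv _ _ hg => exact hg.inv

lemma of_mem_weylGroup (hf : f ∈ D.weylGroup) : IsRootIsometry D f :=
  of_mem_closure subset_rfl hf

lemma mul_refl_mul_inv (hf : IsRootIsometry D f) (x : E) :
    f * KPData.refl x * f⁻¹ = KPData.refl (f x) := by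
  ext y
  obtain ⟨z, rfl⟩ := f.surjective y
  change f (KPData.refl x (f.symm (f z))) = KPData.refl (f x) (f z)
  rw [f.symm_apply_apply, refl_apply, refl_apply, hf.map_sub_smul, coroot, coroot,
    real_inner_smul_left, real_inner_smul_left, hf.inner_map_map, hf.inner_map_map]

end IsRootIsometry

lemma inner_ϖ_sum_smul_α (c : Fin r → ℝ) (j : Fin r) : ⟪D.ϖ j, ∑ k, c k • D.α k⟫ = c j := by
  simp [inner_sum, real_inner_smul_right, D.ϖ_pair]

variable (D) in
lemma sum_inner_ϖ_smul_α (x : E) : ∑ k, ⟪D.ϖ k, x⟫ • D.α k = x := by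
  have hspan : Submodule.span ℝ (Set.range D.α) = ⊤ := by
    rw [eq_top_iff, ← D.span_eq_top, Submodule.span_le]
    intro x hx
    have hsum : ∀ c : Fin r → ℝ, ∑ k, c k • D.α k ∈ Submodule.span ℝ (Set.range D.α) :=
      fun c => Submodule.sum_mem _ fun k _ => Submodule.smul_mem _ _ (Submodule.subset_span ⟨k, rfl⟩)
    rcases D.pos_or_neg x hx with ⟨c, -, rfl⟩ | ⟨c, -, rfl⟩
    exacts [hsum c, Submodule.neg_mem _ (hsum c)]
  have hx : x ∈ Submodule.span ℝ (Set.range D.α) := by rw [hspan]; exact Submodule.mem_top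
  obtain ⟨c, rfl⟩ := (Submodule.mem_span_range_iff_exists_fun ℝ).mp hx
  simp only [inner_ϖ_sum_smul_α]

lemma mem_posRoots_iff {x : E} : x ∈ D.posRoots ↔ x ∈ D.Φ ∧ ∀ k, 0 ≤ ⟪D.ϖ k, x⟫ := by
  refine ⟨?_, fun ⟨hx, h⟩ => ⟨hx, _, h, (D.sum_inner_ϖ_smul_α x).symm⟩⟩
  rintro ⟨hx, c, hc, rfl⟩
  exact ⟨hx, fun k => by rw [inner_ϖ_sum_smul_α]; exact hc k⟩

lemma inner_ϖ_nonneg {x : E} (hx : x ∈ D.posRoots) (k : Fin r) : 0 ≤ ⟪D.ϖ k, x⟫ :=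
  (mem_posRoots_iff.mp hx).2 k

lemma neg_mem_Φ {x : E} (hx : x ∈ D.Φ) : -x ∈ D.Φ := by
  have h := D.reflect_mem x hx x hx
  rwa [inner_coroot_self (D.root_ne_zero x hx), two_smul, sub_add_cancel_left] at h

lemma neg_mem_posRoots_iff {x : E} (hx : x ∈ D.Φ) : -x ∈ D.posRoots ↔ x ∉ D.posRoots := by
  refine ⟨fun hneg hpos => D.root_ne_zero x hx ?_, fun hpos => ?_⟩
  · rw [← D.sum_inner_ϖ_smul_α x]
    refine Finset.sum_eq_zero fun k _ => ?_
    have h := inner_ϖ_nonneg hneg k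
    rw [inner_neg_right, neg_nonneg] at h
    rw [le_antisymm h (inner_ϖ_nonneg hpos k), zero_smul]
  · rcases D.pos_or_neg x hx with ⟨c, hc, hxc⟩ | ⟨c, hc, rfl⟩
    · exact absurd ⟨hx, c, hc, hxc⟩ hpos
    · exact ⟨neg_mem_Φ hx, c, hc, neg_neg _⟩

lemma mem_posRoots_of_inner_ϖ_pos {x : E} (hx : x ∈ D.Φ) {k : Fin r} (h : 0 < ⟪D.ϖ k, x⟫) :
    x ∈ D.posRoots := by
  by_contra hpos
  have h' := inner_ϖ_nonneg ((neg_mem_posRoots_iff hx).mpr hpos) k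
  rw [inner_neg_right] at h'
  linarith

lemma α_mem_posRoots (j : Fin r) : D.α j ∈ D.posRoots :=
  mem_posRoots_of_inner_ϖ_pos (D.α_mem j) (k := j) (by simp [D.ϖ_pair])

lemma posRoots_finite : D.posRoots.Finite :=
  D.Φ.finite_toSet.subset fun _ hx => hx.1

/-- A positive root other than `α j` has a positive coordinate `k ≠ j`, which `s_j` does not
change. -/
lemma refl_α_mem_posRoots {β : E} (hβ : β ∈ D.posRoots) {j : Fin r} (hne : β ≠ D.α j) :
    refl (D.α j) β ∈ D.posRoots := by
  obtain ⟨k, hkj, hk⟩ : ∃ k, k ≠ j ∧ 0 < ⟪D.ϖ k, β⟫ := by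
    by_contra! h
    have hβj : ⟪D.ϖ j, β⟫ • D.α j = β := by
      conv_rhs => rw [← D.sum_inner_ϖ_smul_α β]
      rw [Finset.sum_eq_single j (fun k _ hkj => ?_) (absurd (Finset.mem_univ j))]
      rw [le_antisymm (h k hkj) (inner_ϖ_nonneg hβ k), zero_smul]
    rcases D.reduced _ (D.α_mem j) _ (hβj ▸ hβ.1) with h1 | h1
    · exact hne (by rw [← hβj, h1, one_smul])
    · linarith [inner_ϖ_nonneg hβ j]
  rw [refl_apply]
  refine mem_posRoots_of_inner_ϖ_pos (D.reflect_mem _ (D.α_mem j) β hβ.1) (k := k) ?_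
  rwa [inner_sub_right, real_inner_smul_right, D.ϖ_pair, if_neg hkj, mul_zero, sub_zero]

lemma IsRootIsometry.mem_posRoots_or_neg {f : E ≃ᵃ[ℝ] E} (hf : IsRootIsometry D f) {x : E}
    (hx : x ∈ D.Φ) : f x ∈ D.posRoots ∨ -(f x) ∈ D.posRoots := by
  rw [neg_mem_posRoots_iff (hf.mem_Φ hx)]
  exact em _

lemma mem_chamber_iff {μ : E} : μ ∈ D.chamber ↔ ∀ β ∈ D.posRoots, 0 ≤ ⟪μ, β⟫ := by
  refine ⟨fun h β hβ => ?_, fun h j => h _ (α_mem_posRoots j)⟩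
  rw [← D.sum_inner_ϖ_smul_α β, inner_sum]
  exact Finset.sum_nonneg fun k _ => by
    rw [real_inner_smul_right]
    exact mul_nonneg (inner_ϖ_nonneg hβ k) (h k)

lemma ϖ_mem_chamber (i : Fin r) : D.ϖ i ∈ D.chamber := fun j => by
  rw [D.ϖ_pair]
  split_ifs <;> norm_num

lemma IsRootIsometry.mem_image_chamber_iff {u : E ≃ᵃ[ℝ] E} (hu : IsRootIsometry D u) {μ : E} :
    μ ∈ ⇑u '' D.chamber ↔ ∀ β ∈ D.posRoots, 0 ≤ ⟪μ, u β⟫ := by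
  have hinner : ∀ j, ⟪u.symm μ, D.α j⟫ = ⟪μ, u (D.α j)⟫ := fun j =>
    hu.inner_inv_apply μ (D.α j)
  constructor
  · rintro ⟨l, hl, rfl⟩ β hβ
    rw [hu.inner_map_map]
    exact mem_chamber_iff.mp hl β hβ
  · intro h
    refine ⟨u.symm μ, fun j => ?_, u.apply_symm_apply μ⟩
    rw [hinner]
    exact h _ (α_mem_posRoots j)

lemma IsRootIsometry.mem_image_mul_chamber_iff {w w₀ : E ≃ᵃ[ℝ] E} (hw : IsRootIsometry D w)
    (hw₀ : IsRootIsometry D w₀) (hlong : ∀ x ∈ D.posRoots, -(w₀ x) ∈ D.posRoots)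
    (hsq : w₀ * w₀ = 1) {μ : E} :
    μ ∈ ⇑(w * w₀) '' D.chamber ↔ ∀ γ ∈ D.posRoots, ⟪μ, w γ⟫ ≤ 0 := by
  have hww₀ : ∀ x, (w * w₀) (-(w₀ x)) = -(w x) := fun x => by
    rw [AffineEquiv.coe_mul, Function.comp_apply, hw₀.map_neg, ← Function.comp_apply (f := w₀),
      ← AffineEquiv.coe_mul, hsq, AffineEquiv.coe_one, id, hw.map_neg]
  rw [(hw.mul hw₀).mem_image_chamber_iff]
  refine ⟨fun h γ hγ => ?_, fun h β hβ => ?_⟩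
  · have := h _ (hlong γ hγ)
    rwa [hww₀, inner_neg_right, neg_nonneg] at this
  · have := h _ (hlong β hβ)
    rwa [hw.map_neg, inner_neg_right, neg_nonpos] at this

def height (D : KPData E r) (x : E) : ℝ := ∑ k, ⟪D.ϖ k, x⟫

lemma height_sub_smul_α (x : E) (c : ℝ) (j : Fin r) :
    D.height (x - c • D.α j) = D.height x - c := by
  simp [height, inner_sub_right, real_inner_smul_right, D.ϖ_pair, Finset.sum_sub_distrib]

lemma height_pos {x : E} (hx : x ∈ D.posRoots) : 0 < D.height x := by
  refine Finset.sum_pos' (fun k _ => inner_ϖ_nonneg hx k) ?_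
  by_contra! h
  refine D.root_ne_zero x hx.1 ?_
  rw [← D.sum_inner_ϖ_smul_α x]
  exact Finset.sum_eq_zero fun k hk => by
    rw [le_antisymm (h k hk) (inner_ϖ_nonneg hx k), zero_smul]

lemma exists_inner_α_pos {x : E} (hx : x ∈ D.posRoots) : ∃ k, 0 < ⟪D.α k, x⟫ := by
  by_contra! h
  refine D.root_ne_zero x hx.1 (real_inner_self_nonpos.mp ?_)
  conv_lhs => arg 2; rw [← D.sum_inner_ϖ_smul_α x]
  rw [sum_inner]
  exact Finset.sum_nonpos fun k _ => by
    rw [real_inner_smul_left]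
    exact mul_nonpos_of_nonneg_of_nonpos (inner_ϖ_nonneg hx k) (h k)

lemma one_le_inner_coroot {x y : E} (hx : x ∈ D.Φ) (hy : y ∈ D.Φ) (h : 0 < ⟪x, y⟫) :
    1 ≤ ⟪coroot E x, y⟫ := by
  obtain ⟨m, hm⟩ := D.integrality x hx y hy
  have hpos : 0 < ⟪coroot E x, y⟫ := by
    rw [inner_coroot_left]
    exact mul_pos (div_pos two_pos (real_inner_self_pos.mpr (D.root_ne_zero x hx))) h
  rw [hm] at hpos ⊢
  exact_mod_cast (Int.cast_pos.mp hpos : 0 < m)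

def wordProd (D : KPData E r) (L : List (Fin r)) : E ≃ᵃ[ℝ] E :=
  (L.map fun j => refl (D.α j)).prod

@[simp]
lemma wordProd_nil : D.wordProd [] = 1 := rfl

@[simp]
lemma wordProd_cons (j : Fin r) (L : List (Fin r)) :
    D.wordProd (j :: L) = refl (D.α j) * D.wordProd L :=
  List.prod_cons

@[simp]
lemma wordProd_append (L₁ L₂ : List (Fin r)) :
    D.wordProd (L₁ ++ L₂) = D.wordProd L₁ * D.wordProd L₂ := by
  simp [wordProd]

lemma wordProd_reverse (L : List (Fin r)) : D.wordProd L.reverse = (D.wordProd L)⁻¹ := by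
  induction L with
  | nil => simp
  | cons j L ih => simp [ih, refl_inv]

lemma isRootIsometry_wordProd (L : List (Fin r)) : IsRootIsometry D (D.wordProd L) := by
  induction L with
  | nil => exact .one
  | cons j L ih => exact (IsRootIsometry.refl (D.α_mem j)).mul ih

/-- If `x ≠ α k` and `⟪α k, x⟫ > 0`, then `s_k x` is a positive root of smaller height and
`s_x = s_k s_{s_k x} s_k`. -/
lemma exists_wordProd_eq_refl {x : E} (hx : x ∈ D.posRoots) : ∃ L, D.wordProd L = refl x := by
  suffices ∀ N : ℕ, ∀ x ∈ D.posRoots, D.height x ≤ N → ∃ L, D.wordProd L = refl x from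
    this _ x hx (Nat.le_ceil _)
  intro N
  induction N with
  | zero => exact fun x hx h => absurd h (not_le.mpr (by exact_mod_cast height_pos hx))
  | succ N ih =>
    intro x hx hN
    obtain ⟨k, hk⟩ := exists_inner_α_pos hx
    by_cases hxk : x = D.α k
    · exact ⟨[k], by simp [hxk]⟩
    obtain ⟨L, hL⟩ := ih _ (refl_α_mem_posRoots hx hxk) (by
      rw [refl_apply, height_sub_smul_α]
      have := one_le_inner_coroot (D.α_mem k) hx.1 hk
      push_cast at hN
      linarith)
    have hconj := (IsRootIsometry.refl (D := D) (D.α_mem k)).mul_refl_mul_inv (refl (D.α k) x)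
    rw [refl_refl, refl_inv] at hconj
    refine ⟨k :: L ++ [k], ?_⟩
    simpa only [wordProd_append, wordProd_cons, wordProd_nil, mul_one, hL] using hconj

lemma exists_wordProd_eq {v : E ≃ᵃ[ℝ] E} (hv : v ∈ D.weylGroup) : ∃ L, D.wordProd L = v := by
  induction hv using Subgroup.closure_induction with
  | mem _ h =>
    obtain ⟨x, hx, rfl⟩ := h
    by_cases hpos : x ∈ D.posRoots
    · exact exists_wordProd_eq_refl hpos
    · rw [← refl_neg]
      exact exists_wordProd_eq_refl ((neg_mem_posRoots_iff hx).mpr hpos)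
  | one => exact ⟨[], rfl⟩
  | mul _ _ _ _ h₁ h₂ =>
    obtain ⟨L₁, rfl⟩ := h₁
    obtain ⟨L₂, rfl⟩ := h₂
    exact ⟨L₁ ++ L₂, wordProd_append L₁ L₂⟩
  | inv _ _ h =>
    obtain ⟨L, rfl⟩ := h
    exact ⟨L.reverse, wordProd_reverse L⟩

lemma exists_shorter_wordProd_eq_mul_refl (K : List (Fin r)) {j : Fin r}
    (h : -(D.wordProd K (D.α j)) ∈ D.posRoots) :
    ∃ K' : List (Fin r), K'.length < K.length ∧ D.wordProd K' = D.wordProd K * refl (D.α j) := by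
  induction K with
  | nil => exact absurd (α_mem_posRoots j) ((neg_mem_posRoots_iff (D.α_mem j)).mp h)
  | cons k K ih =>
    by_cases hK : -(D.wordProd K (D.α j)) ∈ D.posRoots
    · obtain ⟨K', hlen, hK'⟩ := ih hK
      exact ⟨k :: K', by simpa using hlen, by simp [hK', mul_assoc]⟩
    have hq := isRootIsometry_wordProd (D := D) K
    have hpos : D.wordProd K (D.α j) ∈ D.posRoots :=
      (hq.mem_posRoots_or_neg (D.α_mem j)).resolve_right hK
    simp only [wordProd_cons, AffineEquiv.coe_mul, Function.comp_apply] at h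
    have heq : D.wordProd K (D.α j) = D.α k := by
      by_contra hne
      exact (neg_mem_posRoots_iff (refl_α_mem_posRoots hpos hne).1).mp h
        (refl_α_mem_posRoots hpos hne)
    refine ⟨K, Nat.lt_succ_self _, ?_⟩
    rw [wordProd_cons, ← heq, ← hq.mul_refl_mul_inv]
    simp only [mul_assoc, inv_mul_cancel_left, refl_mul_self, mul_one]

lemma eq_one_of_mapsTo_posRoots {v : E ≃ᵃ[ℝ] E} (hv : v ∈ D.weylGroup)
    (h : ∀ β ∈ D.posRoots, v β ∈ D.posRoots) : v = 1 := by
  obtain ⟨L, rfl⟩ := exists_wordProd_eq hv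
  suffices ∀ n, ∀ L : List (Fin r), L.length = n →
      (∀ β ∈ D.posRoots, D.wordProd L β ∈ D.posRoots) → D.wordProd L = 1 from this _ L rfl h
  intro n
  induction n using Nat.strong_induction_on with
  | _ n ih =>
    intro L hn h
    rcases L.eq_nil_or_concat' with rfl | ⟨L, j, rfl⟩
    · rfl
    have hneg : -(D.wordProd L (D.α j)) ∈ D.posRoots := by
      have := h _ (α_mem_posRoots j)
      rwa [wordProd_append, wordProd_cons, wordProd_nil, mul_one, AffineEquiv.coe_mul,
        Function.comp_apply, refl_apply_self (D.root_ne_zero _ (D.α_mem j)),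
        (isRootIsometry_wordProd L).map_neg] at this
    obtain ⟨K, hlen, hK⟩ := exists_shorter_wordProd_eq_mul_refl L hneg
    have hK' : D.wordProd K = D.wordProd (L ++ [j]) := by simp [hK]
    rw [← hK'] at h ⊢
    exact ih _ (by simp at hn; omega) K rfl h

lemma eq_of_image_posRoots_eq {v v' : E ≃ᵃ[ℝ] E} (hv : v ∈ D.weylGroup) (hv' : v' ∈ D.weylGroup)
    (h : v '' D.posRoots = v' '' D.posRoots) : v = v' := by
  refine (inv_mul_eq_one.mp (eq_one_of_mapsTo_posRoots (mul_mem (inv_mem hv') hv) ?_)).symm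
  intro β hβ
  obtain ⟨γ, hγ, hγβ⟩ : v β ∈ v' '' D.posRoots := h ▸ Set.mem_image_of_mem v hβ
  change v'.symm (v β) ∈ D.posRoots
  rwa [← hγβ, v'.symm_apply_apply]

lemma mul_self_eq_one_of_neg_mem_posRoots {w₀ : E ≃ᵃ[ℝ] E} (hw₀ : w₀ ∈ D.weylGroup)
    (hlong : ∀ x ∈ D.posRoots, -(w₀ x) ∈ D.posRoots) : w₀ * w₀ = 1 :=
  eq_one_of_mapsTo_posRoots (mul_mem hw₀ hw₀) fun β hβ => by
    have := hlong _ (hlong β hβ)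
    rwa [(IsRootIsometry.of_mem_weylGroup hw₀).map_neg, neg_neg] at this

def inversionSet (D : KPData E r) (w : E ≃ᵃ[ℝ] E) : Set E :=
  {x | x ∈ D.posRoots ∧ -(w x) ∈ D.posRoots}

lemma len_eq_ncard_inversionSet (w : E ≃ᵃ[ℝ] E) : D.len w = (D.inversionSet w).ncard := by
  have h : ∀ y : E, y ∈ Neg.neg '' D.posRoots ↔ -y ∈ D.posRoots := fun y => by
    rw [Set.image_neg_eq_neg, Set.mem_neg]
  simp only [len, h, ← Nat.card_coe_set_eq]
  rfl

lemma inversionSet_finite (w : E ≃ᵃ[ℝ] E) : (D.inversionSet w).Finite :=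
  posRoots_finite.subset fun _ hx => hx.1

/-- `Φ⁺ ∖ Φᵢ⁺`, where `Φᵢ` is the parabolic subsystem spanned by the `αⱼ` with `j ≠ i`. -/
def posRootsInvolving (D : KPData E r) (i : Fin r) : Set E :=
  {γ ∈ D.posRoots | ⟪D.ϖ i, γ⟫ ≠ 0}

section Inversions

variable {w : E ≃ᵃ[ℝ] E} {i : Fin r}

lemma image_neg_inversionSet_eq (hw : IsRootIsometry D w)
    (hC : ∀ γ ∈ D.posRoots, ⟪D.ϖ i, w γ⟫ ≤ 0) :
    (fun β => -(w β)) '' {β ∈ D.inversionSet w | ⟪D.ϖ i, w β⟫ ≠ 0} = D.posRootsInvolving i := by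
  ext γ
  constructor
  · rintro ⟨β, ⟨⟨-, hβ⟩, hβi⟩, rfl⟩
    exact ⟨hβ, by rwa [inner_neg_right, neg_ne_zero]⟩
  · rintro ⟨hγ, hγi⟩
    have hneg : -(w⁻¹ γ) ∈ D.posRoots := by
      rw [neg_mem_posRoots_iff (hw.inv.mem_Φ hγ.1)]
      intro hpos
      have := hC _ hpos
      rw [AffineEquiv.inv_def, w.apply_symm_apply] at this
      exact hγi (le_antisymm this (inner_ϖ_nonneg hγ i))
    have hwβ : w (-(w⁻¹ γ)) = -γ := by rw [hw.map_neg, AffineEquiv.inv_def, w.apply_symm_apply]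
    refine ⟨_, ⟨⟨hneg, ?_⟩, ?_⟩, show -(w _) = γ by rw [hwβ, neg_neg]⟩
    · rwa [hwβ, neg_neg]
    · rwa [hwβ, inner_neg_right, neg_ne_zero]

lemma ncard_posRootsInvolving_eq (hw : IsRootIsometry D w)
    (hC : ∀ γ ∈ D.posRoots, ⟪D.ϖ i, w γ⟫ ≤ 0) :
    (D.posRootsInvolving i).ncard = {β ∈ D.inversionSet w | ⟪D.ϖ i, w β⟫ ≠ 0}.ncard := by
  rw [← image_neg_inversionSet_eq hw hC, Set.InjOn.ncard_image]
  exact fun a _ b _ hab => w.injective (neg_injective hab)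

lemma ncard_posRootsInvolving_le_len (hw : IsRootIsometry D w)
    (hC : ∀ γ ∈ D.posRoots, ⟪D.ϖ i, w γ⟫ ≤ 0) : (D.posRootsInvolving i).ncard ≤ D.len w := by
  rw [ncard_posRootsInvolving_eq hw hC, len_eq_ncard_inversionSet]
  exact Set.ncard_le_ncard (Set.sep_subset _ _) (inversionSet_finite w)

lemma len_le_ncard_posRootsInvolving_iff (hw : IsRootIsometry D w)
    (hC : ∀ γ ∈ D.posRoots, ⟪D.ϖ i, w γ⟫ ≤ 0) :
    D.len w ≤ (D.posRootsInvolving i).ncard ↔ ∀ β ∈ D.inversionSet w, ⟪D.ϖ i, w β⟫ ≠ 0 := by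
  rw [ncard_posRootsInvolving_eq hw hC, len_eq_ncard_inversionSet]
  refine ⟨fun h => ?_, fun h => by rw [Set.sep_eq_self_iff_mem_true.mpr h]⟩
  rw [← Set.sep_eq_self_iff_mem_true]
  exact Set.eq_of_subset_of_ncard_le (Set.sep_subset _ _) h (inversionSet_finite w)

lemma image_posRoots_eq (hw : IsRootIsometry D w) (hC : ∀ γ ∈ D.posRoots, ⟪D.ϖ i, w γ⟫ ≤ 0)
    (htight : ∀ β ∈ D.inversionSet w, ⟪D.ϖ i, w β⟫ ≠ 0) :
    w '' D.posRoots =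
      {x ∈ (D.Φ : Set E) | ⟪D.ϖ i, x⟫ < 0 ∨ (⟪D.ϖ i, x⟫ = 0 ∧ x ∈ D.posRoots)} := by
  ext x
  constructor
  · rintro ⟨β, hβ, rfl⟩
    refine ⟨hw.mem_Φ hβ.1, (hC β hβ).lt_or_eq.imp_right fun h0 => ⟨h0, ?_⟩⟩
    exact (hw.mem_posRoots_or_neg hβ.1).resolve_right fun hneg => htight β ⟨hβ, hneg⟩ h0
  · rintro ⟨hx, hxi⟩
    refine ⟨w⁻¹ x, ?_, w.apply_symm_apply x⟩
    by_contra hpos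
    have hneg := (neg_mem_posRoots_iff (hw.inv.mem_Φ hx)).mpr hpos
    have hwneg : w (-(w⁻¹ x)) = -x := by rw [hw.map_neg, AffineEquiv.inv_def, w.apply_symm_apply]
    rcases hxi with hlt | ⟨h0, hxpos⟩
    · have := hC _ hneg
      rw [hwneg, inner_neg_right] at this
      linarith
    · exact htight _ ⟨hneg, by rwa [hwneg, neg_neg]⟩ (by rw [hwneg, inner_neg_right, h0, neg_zero])

lemma eq_of_len_le_ncard_posRootsInvolving {w' : E ≃ᵃ[ℝ] E} (hw : w ∈ D.weylGroup)
    (hw' : w' ∈ D.weylGroup) (hC : ∀ γ ∈ D.posRoots, ⟪D.ϖ i, w γ⟫ ≤ 0)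
    (hC' : ∀ γ ∈ D.posRoots, ⟪D.ϖ i, w' γ⟫ ≤ 0) (hlen : D.len w ≤ (D.posRootsInvolving i).ncard)
    (hlen' : D.len w' ≤ (D.posRootsInvolving i).ncard) : w = w' := by
  have hW := IsRootIsometry.of_mem_weylGroup hw
  have hW' := IsRootIsometry.of_mem_weylGroup hw'
  refine eq_of_image_posRoots_eq hw hw' ?_
  rw [image_posRoots_eq hW hC ((len_le_ncard_posRootsInvolving_iff hW hC).mp hlen),
    image_posRoots_eq hW' hC' ((len_le_ncard_posRootsInvolving_iff hW' hC').mp hlen')]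

end Inversions

lemma mem_span_α_ne_iff {i : Fin r} {x : E} :
    x ∈ Submodule.span ℝ (D.α '' {j | j ≠ i}) ↔ ⟪D.ϖ i, x⟫ = 0 := by
  constructor
  · intro hx
    refine Submodule.span_induction (p := fun y _ => ⟪D.ϖ i, y⟫ = 0) ?_ ?_ ?_ ?_ hx
    · rintro _ ⟨j, hj, rfl⟩
      rw [D.ϖ_pair, if_neg (Ne.symm hj)]
    · exact inner_zero_right _
    · intro a b _ _ ha hb
      rw [inner_add_right, ha, hb, add_zero]
    · intro c a _ ha
      rw [real_inner_smul_right, ha, mul_zero]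
  · intro hx
    rw [← D.sum_inner_ϖ_smul_α x]
    refine Submodule.sum_mem _ fun k _ => ?_
    by_cases hk : k = i
    · rw [hk, hx, zero_smul]
      exact Submodule.zero_mem _
    · exact Submodule.smul_mem _ _ (Submodule.subset_span ⟨k, hk, rfl⟩)

lemma apply_eq_self_of_mem_closure_refl {T : Set E} {μ : E} (hT : ∀ x ∈ T, ⟪x, μ⟫ = 0)
    {g : E ≃ᵃ[ℝ] E} (hg : g ∈ Subgroup.closure {f | ∃ x ∈ T, f = refl x}) : g μ = μ := by
  induction hg using Subgroup.closure_induction with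
  | mem _ h =>
    obtain ⟨x, hx, rfl⟩ := h
    exact refl_apply_of_inner_eq_zero (hT x hx)
  | one => rfl
  | mul f g _ _ hf hg => rw [AffineEquiv.coe_mul, Function.comp_apply, hg, hf]
  | inv f _ hf => rw [AffineEquiv.inv_def, AffineEquiv.symm_apply_eq, hf]

section ParabolicTwist

variable {u w₀ : E ≃ᵃ[ℝ] E} {i : Fin r}

lemma inner_ϖ_apply_of_apply_ϖ_eq (hu : IsRootIsometry D u) (hfix : u (D.ϖ i) = D.ϖ i)
    (y : E) : ⟪D.ϖ i, u y⟫ = ⟪D.ϖ i, y⟫ := by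
  conv_lhs => rw [← hfix]
  exact hu.inner_map_map _ _

lemma inner_ϖ_mul_apply_nonpos (hu : IsRootIsometry D u) (hfix : u (D.ϖ i) = D.ϖ i)
    (hlong : ∀ x ∈ D.posRoots, -(w₀ x) ∈ D.posRoots) :
    ∀ γ ∈ D.posRoots, ⟪D.ϖ i, (u * w₀) γ⟫ ≤ 0 := fun γ hγ => by
  have := inner_ϖ_nonneg (hlong γ hγ) i
  rw [inner_neg_right] at this
  rw [AffineEquiv.coe_mul, Function.comp_apply, inner_ϖ_apply_of_apply_ϖ_eq hu hfix]
  linarith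

lemma inner_ϖ_mul_apply_ne_zero (hu : IsRootIsometry D u) (hfix : u (D.ϖ i) = D.ϖ i)
    (hw₀ : IsRootIsometry D w₀) (hlong : ∀ x ∈ D.posRoots, -(w₀ x) ∈ D.posRoots)
    (hulong : ∀ x ∈ D.posRoots, ⟪D.ϖ i, x⟫ = 0 → -(u x) ∈ D.posRoots) :
    ∀ β ∈ D.inversionSet (u * w₀), ⟪D.ϖ i, (u * w₀) β⟫ ≠ 0 := by
  rintro β ⟨hβ, hneg⟩ h0
  rw [AffineEquiv.coe_mul, Function.comp_apply] at hneg h0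
  have hγ0 : ⟪D.ϖ i, -(w₀ β)⟫ = 0 := by
    rw [inner_neg_right, ← inner_ϖ_apply_of_apply_ϖ_eq hu hfix, h0, neg_zero]
  have hpos := hulong _ (hlong β hβ) hγ0
  rw [hu.map_neg, neg_neg] at hpos
  exact (neg_mem_posRoots_iff (hu.mem_Φ (hw₀.mem_Φ hβ.1))).mp hneg hpos

end ParabolicTwist

end

end KPData

theorem wi_unique_minimal_length_general (D : KPData E r) (i : Fin r)
    (w₀ : E ≃ᵃ[ℝ] E) (hw₀ : w₀ ∈ D.weylGroup)
    (hw₀long : ∀ x ∈ D.posRoots, -(w₀ x) ∈ D.posRoots)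
    (w0p : E ≃ᵃ[ℝ] E)
    (hw0p : w0p ∈ Subgroup.closure
      {f | ∃ x ∈ (D.Φ : Set E) ∩ (Submodule.span ℝ (D.α '' {j | j ≠ i}) : Set E), f = refl x})
    (hw0plong : ∀ x ∈ D.posRoots ∩ (Submodule.span ℝ (D.α '' {j | j ≠ i}) : Set E),
      -(w0p x) ∈ D.posRoots) :
    (w0p * w₀ ∈ D.weylGroup ∧ D.ϖ i ∈ ⇑(w0p * w₀ * w₀) '' D.chamber) ∧
    (∀ w ∈ D.weylGroup, D.ϖ i ∈ ⇑(w * w₀) '' D.chamber → D.len (w0p * w₀) ≤ D.len w) ∧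
    (∀ w ∈ D.weylGroup, D.ϖ i ∈ ⇑(w * w₀) '' D.chamber →
      (∀ w' ∈ D.weylGroup, D.ϖ i ∈ ⇑(w' * w₀) '' D.chamber → D.len w ≤ D.len w') →
      w = w0p * w₀) := by
  have hw0pW : w0p ∈ D.weylGroup :=
    Subgroup.closure_mono (by rintro _ ⟨x, hx, rfl⟩; exact ⟨x, hx.1, rfl⟩) hw0p
  have hwiW := mul_mem hw0pW hw₀
  have hfix : w0p (D.ϖ i) = D.ϖ i := apply_eq_self_of_mem_closure_refl
    (fun x hx => real_inner_comm x _ ▸ mem_span_α_ne_iff.mp hx.2) hw0p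
  have hW₀ := IsRootIsometry.of_mem_weylGroup hw₀
  have hsq := mul_self_eq_one_of_neg_mem_posRoots hw₀ hw₀long
  have hC : ∀ w ∈ D.weylGroup, D.ϖ i ∈ ⇑(w * w₀) '' D.chamber →
      ∀ γ ∈ D.posRoots, ⟪D.ϖ i, w γ⟫ ≤ 0 := fun w hw =>
    ((IsRootIsometry.of_mem_weylGroup hw).mem_image_mul_chamber_iff hW₀ hw₀long hsq).mp
  have hP := IsRootIsometry.of_mem_weylGroup hw0pW
  have hCi := inner_ϖ_mul_apply_nonpos hP hfix hw₀long
  have hleni : D.len (w0p * w₀) ≤ (D.posRootsInvolving i).ncard :=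
    (len_le_ncard_posRootsInvolving_iff (hP.mul hW₀) hCi).mpr <|
      inner_ϖ_mul_apply_ne_zero hP hfix hW₀ hw₀long fun x hx h0 =>
        hw0plong x ⟨hx, mem_span_α_ne_iff.mpr h0⟩
  have hwiC : D.ϖ i ∈ ⇑(w0p * w₀ * w₀) '' D.chamber := by
    rw [mul_assoc, hsq, mul_one]
    exact ⟨D.ϖ i, ϖ_mem_chamber i, hfix⟩
  refine ⟨⟨hwiW, hwiC⟩, fun w hw hwC => ?_, fun w hw hwC hmin => ?_⟩
  · exact hleni.trans (ncard_posRootsInvolving_le_len (.of_mem_weylGroup hw) (hC w hw hwC))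
  · exact eq_of_len_le_ncard_posRootsInvolving hw hwiW (hC w hw hwC) hCi
      ((hmin _ hwiW hwiC).trans hleni) hleni

/-- For a minuscule index `i`, the element `w_i = w₀^i w₀` is the unique
element of minimal length of the Weyl group sending the chamber `w₀(𝒞₀)` to a region
containing `ϖ_i^∨`. -/
theorem wi_unique_minimal_length (D : KPData E r) (i : Fin r) (hi : D.n i = 1)
    (w₀ : E ≃ᵃ[ℝ] E) (hw₀ : w₀ ∈ D.weylGroup)
    (hw₀long : ∀ x ∈ D.posRoots, -(w₀ x) ∈ D.posRoots)
    (w0p : E ≃ᵃ[ℝ] E)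
    (hw0p : w0p ∈ Subgroup.closure
      {f | ∃ x ∈ (D.Φ : Set E) ∩ (Submodule.span ℝ (D.α '' {j | j ≠ i}) : Set E), f = refl x})
    (hw0plong : ∀ x ∈ D.posRoots ∩ (Submodule.span ℝ (D.α '' {j | j ≠ i}) : Set E),
      -(w0p x) ∈ D.posRoots) :
    (w0p * w₀ ∈ D.weylGroup ∧ D.ϖ i ∈ ⇑(w0p * w₀ * w₀) '' D.chamber) ∧
    (∀ w ∈ D.weylGroup, D.ϖ i ∈ ⇑(w * w₀) '' D.chamber → D.len (w0p * w₀) ≤ D.len w) ∧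
    (∀ w ∈ D.weylGroup, D.ϖ i ∈ ⇑(w * w₀) '' D.chamber →
      (∀ w' ∈ D.weylGroup, D.ϖ i ∈ ⇑(w' * w₀) '' D.chamber → D.len w ≤ D.len w') →
      w = w0p * w₀) :=
  wi_unique_minimal_length_general D i w₀ hw₀ hw₀long w0p hw0p hw0plong
end
end
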